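/- Let A be a C*-algebra and let a, b ∈ A be regular elements such that ab is regular. Set p = bb†, q = a†(a†)*, r = bb*, s = a†a. Then (ab)† = b†a† if and only if b†(qp − pq)a* = 0 and b†(sr − rs)a* = 0. -/
import Mathlib


/-- `x` satisfies the four Moore-Penrose equations for `a`. -/
def IsMPInv {A : Type*} [NonUnitalNormedRing A] [StarRing A] [CStarRing A] (a x : A) : Prop :=
  a * x * a = a ∧ x * a * x = x ∧ star (a * x) = a * x ∧ star (x * a) = x * a

section aux

variable {A : Type*} [NonUnitalNormedRing A] [StarRing A] [CStarRing A]

/-- Uniqueness of the Moore-Penrose inverse. -/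
lemma mp_unique {c x y : A} (hx : IsMPInv c x) (hy : IsMPInv c y) : x = y := by
  obtain ⟨hx1, hx2, hx3, hx4⟩ := hx
  obtain ⟨hy1, hy2, hy3, hy4⟩ := hy
  have k1 : x = x * c * y := by
    calc x = x * c * x := hx2.symm
      _ = x * star (c * x) := by rw [hx3, mul_assoc]
      _ = x * (star x * star c) := by rw [star_mul]
      _ = x * (star x * star (c * y * c)) := by rw [hy1]
      _ = x * (star x * (star c * (c * y))) := by rw [star_mul, hy3]
      _ = (x * star x * star c) * (c * y) := by simp only [mul_assoc]
      _ = (x * star (c * x)) * (c * y) := by simp only [star_mul, mul_assoc]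
      _ = (x * (c * x)) * (c * y) := by rw [hx3]
      _ = x * c * y := by simp only [← mul_assoc, hx2]
  have k2 : y = x * c * y := by
    calc y = y * c * y := hy2.symm
      _ = star (y * c) * y := by rw [hy4]
      _ = star c * star y * y := by rw [star_mul]
      _ = star (c * x * c) * star y * y := by rw [hx1]
      _ = star (x * c) * (star (y * c) * y) := by simp only [star_mul, mul_assoc]
      _ = (x * c) * ((y * c) * y) := by rw [hx4, hy4]
      _ = x * c * y := by simp only [← mul_assoc, hy2]
  exact k1.trans k2.symm

lemma mp_J {c cd : A} (hc : IsMPInv c cd) : cd * (c * star c) = star c := by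
  calc cd * (c * star c) = (cd * c) * star c := (mul_assoc _ _ _).symm
    _ = star (cd * c) * star c := by rw [hc.2.2.2]
    _ = star (c * (cd * c)) := (star_mul _ _).symm
    _ = star (c * cd * c) := by rw [mul_assoc]
    _ = star c := by rw [hc.1]

lemma mp_K {c cd : A} (hc : IsMPInv c cd) : cd * star (c * cd) = cd := by
  rw [hc.2.2.1, ← mul_assoc, hc.2.1]

/-- Right cancellation of `c * star c` against `c`, using a Moore-Penrose inverse of `c`. -/
lemma mp_cancel {c cd : A} (hc : IsMPInv c cd) {u v : A}
    (h : u * (c * star c) = v * (c * star c)) : u * c = v * c := by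
  have h2 : star c * star cd = cd * c := by rw [← star_mul, hc.2.2.2]
  have key : ∀ w : A, w * (c * star c) * star cd = w * c := by
    intro w
    calc w * (c * star c) * star cd = w * (c * (star c * star cd)) := by
          simp only [mul_assoc]
      _ = w * (c * (cd * c)) := by rw [h2]
      _ = w * (c * cd * c) := by rw [← mul_assoc c]
      _ = w * c := by rw [hc.1]
  rw [← key u, ← key v, h]

/-- Characterisation of when `x` equals the Moore-Penrose inverse `cd` of `c`. -/
lemma mp_char {c cd x : A} (hc : IsMPInv c cd) :
    cd = x ↔ (x * star (c * x) = x ∧ x * (c * star c) = star c) := by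
  constructor
  · rintro rfl
    exact ⟨mp_K hc, mp_J hc⟩
  · rintro ⟨e1, e2⟩
    have hxc : x * c = cd * c := mp_cancel hc (e2.trans (mp_J hc).symm)
    have eq4 : star (x * c) = x * c := by rw [hxc]; exact hc.2.2.2
    have eq1 : c * x * c = c := by rw [mul_assoc, hxc, ← mul_assoc]; exact hc.1
    have hE : (c * x) * star (c * x) = c * x := by rw [mul_assoc, e1]
    have eq3 : star (c * x) = c * x := by
      conv_lhs => rw [← hE]
      rw [star_mul, star_star, hE]
    have eq2 : x * c * x = x := by rw [mul_assoc, ← eq3, e1]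
    exact mp_unique hc ⟨eq1, eq2, eq3, eq4⟩

end aux

theorem stmt_12 {A : Type*} [NonUnitalNormedRing A] [StarRing A] [CStarRing A]
    (a b ad bd abd p q r s : A)
    (ha : IsMPInv a ad) (hb : IsMPInv b bd) (hab : IsMPInv (a * b) abd)
    (hp : p = b * bd) (hq : q = ad * star ad) (hr : r = b * star b) (hs : s = ad * a) :
    abd = bd * ad ↔
      (bd * (q * p - p * q) * star a = 0 ∧ bd * (s * r - r * s) * star a = 0) := by
  subst hp hq hr hs
  have hbs : star bd * star b = b * bd := by rw [← star_mul, hb.2.2.1]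
  have has : star ad * star a = a * ad := by rw [← star_mul, ha.2.2.1]
  have hIa : ad * (a * star a) = star a := by
    calc ad * (a * star a) = (ad * a) * star a := (mul_assoc _ _ _).symm
      _ = star (ad * a) * star a := by rw [ha.2.2.2]
      _ = star (a * (ad * a)) := (star_mul _ _).symm
      _ = star (a * ad * a) := by rw [mul_assoc]
      _ = star a := by rw [ha.1]
  have hIb : bd * (b * star b) = star b := by
    calc bd * (b * star b) = (bd * b) * star b := (mul_assoc _ _ _).symm
      _ = star (bd * b) * star b := by rw [hb.2.2.2]
      _ = star (b * (bd * b)) := (star_mul _ _).symm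
      _ = star (b * bd * b) := by rw [mul_assoc]
      _ = star b := by rw [hb.1]
  have idA : bd * (ad * star ad * (b * bd) - (b * bd) * (ad * star ad)) * star a
      = (bd * ad) * star ((a * b) * (bd * ad)) - (bd * ad) := by
    have t1 : bd * (ad * star ad * (b * bd)) * star a
        = (bd * ad) * star ((a * b) * (bd * ad)) := by
      simp only [star_mul, mul_assoc]
      rw [show star bd * (star b * star a) = b * (bd * star a) from by
        rw [← mul_assoc, hbs, mul_assoc]]
    have t2 : bd * ((b * bd) * (ad * star ad)) * star a = bd * ad := by
      simp only [mul_assoc]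
      rw [show star ad * star a = a * ad from has]
      rw [show ad * (a * ad) = ad from by rw [← mul_assoc]; exact ha.2.1]
      rw [show bd * (b * (bd * ad)) = (bd * b * bd) * ad from by simp only [mul_assoc],
        hb.2.1]
    rw [mul_sub, sub_mul, t1, t2]
  have idB : bd * ((ad * a) * (b * star b) - (b * star b) * (ad * a)) * star a
      = (bd * ad) * ((a * b) * star (a * b)) - star (a * b) := by
    have t1 : bd * ((ad * a) * (b * star b)) * star a
        = (bd * ad) * ((a * b) * star (a * b)) := by
      simp only [star_mul, mul_assoc]
    have t2 : bd * ((b * star b) * (ad * a)) * star a = star (a * b) := by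
      simp only [star_mul, mul_assoc]
      rw [show ad * (a * star a) = star a from hIa]
      rw [show bd * (b * (star b * star a)) = (bd * (b * star b)) * star a from by
        simp only [mul_assoc], hIb]
    rw [mul_sub, sub_mul, t1, t2]
  rw [mp_char hab]
  have e1 : bd * (ad * star ad * (b * bd) - (b * bd) * (ad * star ad)) * star a = 0 ↔
      (bd * ad) * star ((a * b) * (bd * ad)) = bd * ad := by rw [idA, sub_eq_zero]
  have e2 : bd * ((ad * a) * (b * star b) - (b * star b) * (ad * a)) * star a = 0 ↔
      (bd * ad) * ((a * b) * star (a * b)) = star (a * b) := by rw [idB, sub_eq_zero]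
  exact and_congr e1.symm e2.symm
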